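/- Let L be a positive integer, let d ∈ ℍ and x ∈ ℍ^L be fixed, define the error e(w) = d − Σ_{l} w_l·x_l for w ∈ ℍ^L, and let f : ℍ^L → ℍ be f(w) = e(w)·e(w)*. Then for every index m and every point w ∈ ℍ^L, the m-th HR*-partial derivative of f at w equals −(1/2)·e(w)·x_m*; that is, ∂(e·e*)/∂w_m* = −(1/2)·e·x_m*. -/

import Mathlib

open Quaternion

/-- The imaginary unit `i` of the real quaternions. -/
def qI : ℍ[ℝ] := ⟨0, 1, 0, 0⟩

/-- The imaginary unit `j` of the real quaternions. -/
def qJ : ℍ[ℝ] := ⟨0, 0, 1, 0⟩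

/-- The imaginary unit `k` of the real quaternions. -/
def qK : ℍ[ℝ] := ⟨0, 0, 0, 1⟩

/-- The `m`-th HR*-partial derivative of `f : ℍ^L → ℍ` at `w`:
`(1/4) (D_{1,m} f(w) + (D_{i,m} f(w))·i + (D_{j,m} f(w))·j + (D_{k,m} f(w))·k)`,
where `D_{v,m} f(w)` is the real Fréchet derivative of `f` at `w` in direction `v·e_m`. -/
noncomputable def HRStarPartial {L : ℕ} (f : (Fin L → ℍ[ℝ]) → ℍ[ℝ]) (m : Fin L)
    (w : Fin L → ℍ[ℝ]) : ℍ[ℝ] :=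
  (4 : ℍ[ℝ])⁻¹ * (fderiv ℝ f w (Pi.single m 1) + fderiv ℝ f w (Pi.single m qI) * qI
    + fderiv ℝ f w (Pi.single m qJ) * qJ + fderiv ℝ f w (Pi.single m qK) * qK)

/-!
Write `e = d - ∑ l, w l * x l`. Its derivative in the direction `v • e_m` is `-(v * x_m)`, so by
the product rule `D_{v,m}(e e*) = -(e x_m* v*) - v x_m e*`. After right multiplication by `v` and
summation over `v ∈ {1, i, j, k}`, the first terms give `-4 e x_m*` because `v* v = 1`, while the
second give `-(q + i q i + j q j + k q k) = 2 q*` with `q = x_m e*`, i.e. `2 e x_m*`. Hence the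
sum is `-2 e x_m*`, and the factor `1/4` gives the claim.
-/

instance {R : Type*} [CommRing R] [StarRing R] [TrivialStar R] : StarModule R ℍ[R] :=
  ⟨fun r a => by rw [star_trivial r]; exact QuaternionAlgebra.star_smul r a⟩

@[simp] lemma re_qI : qI.re = 0 := rfl
@[simp] lemma imI_qI : qI.imI = 1 := rfl
@[simp] lemma imJ_qI : qI.imJ = 0 := rfl
@[simp] lemma imK_qI : qI.imK = 0 := rfl
@[simp] lemma re_qJ : qJ.re = 0 := rfl
@[simp] lemma imI_qJ : qJ.imI = 0 := rfl
@[simp] lemma imJ_qJ : qJ.imJ = 1 := rfl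
@[simp] lemma imK_qJ : qJ.imK = 0 := rfl
@[simp] lemma re_qK : qK.re = 0 := rfl
@[simp] lemma imI_qK : qK.imI = 0 := rfl
@[simp] lemma imJ_qK : qK.imJ = 0 := rfl
@[simp] lemma imK_qK : qK.imK = 1 := rfl

lemma star_qI_mul_qI : star qI * qI = 1 := by ext <;> simp
lemma star_qJ_mul_qJ : star qJ * qJ = 1 := by ext <;> simp
lemma star_qK_mul_qK : star qK * qK = 1 := by ext <;> simp

lemma add_qI_mul_mul_qI_add_qJ_mul_mul_qJ_add_qK_mul_mul_qK (q : ℍ[ℝ]) :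
    q + qI * q * qI + qJ * q * qJ + qK * q * qK = -(star q + star q) := by
  ext <;> simp

lemma mul_star_neg_mul_add_neg_mul_mul_star_mul {R : Type*} [Ring R] [StarRing R] {v : R}
    (hv : star v * v = 1) (c a : R) :
    (c * star (-(v * a)) + -(v * a) * star c) * v = -(c * star a) - v * (a * star c) * v := by
  rw [star_neg, star_mul, add_mul, mul_neg, neg_mul, neg_mul, mul_assoc, mul_assoc, hv, mul_one,
    neg_mul, ← sub_eq_add_neg]
  simp only [mul_assoc]

lemma hrStar_sum_mul_star_self (c a : ℍ[ℝ]) :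
    (c * star (-(1 * a)) + -(1 * a) * star c)
      + (c * star (-(qI * a)) + -(qI * a) * star c) * qI
      + (c * star (-(qJ * a)) + -(qJ * a) * star c) * qJ
      + (c * star (-(qK * a)) + -(qK * a) * star c) * qK
      = -(c * star a + c * star a) := by
  have hsum := add_qI_mul_mul_qI_add_qJ_mul_mul_qJ_add_qK_mul_mul_qK (a * star c)
  rw [star_mul, star_star] at hsum
  rw [mul_star_neg_mul_add_neg_mul_mul_star_mul star_qI_mul_qI,
    mul_star_neg_mul_add_neg_mul_mul_star_mul star_qJ_mul_qJ,
    mul_star_neg_mul_add_neg_mul_mul_star_mul star_qK_mul_qK, one_mul, star_neg, mul_neg, neg_mul]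
  calc _ = -(c * star a + c * star a + c * star a + c * star a)
          - (a * star c + qI * (a * star c) * qI + qJ * (a * star c) * qJ
            + qK * (a * star c) * qK) := by abel
    _ = -(c * star a + c * star a) := by rw [hsum]; abel

lemma inv_four_mul_two : (4 : ℍ[ℝ])⁻¹ * 2 = 2⁻¹ := by
  rw [show (4 : ℍ[ℝ]) = ((4 : ℝ) : ℍ[ℝ]) by norm_cast, show (2 : ℍ[ℝ]) = ((2 : ℝ) : ℍ[ℝ]) by
    norm_cast, ← Quaternion.coe_inv, ← Quaternion.coe_inv, ← Quaternion.coe_mul]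
  norm_num

lemma HasFDerivAt.fderiv_mul_star_self_apply {E 𝔸 : Type*} [NormedAddCommGroup E]
    [NormedSpace ℝ E] [NormedRing 𝔸] [NormedAlgebra ℝ 𝔸] [StarRing 𝔸] [StarModule ℝ 𝔸]
    [ContinuousStar 𝔸] {e : E → 𝔸} {e' : E →L[ℝ] 𝔸} {w : E} (he : HasFDerivAt e e' w)
    (h : E) : fderiv ℝ (fun v => e v * star (e v)) w h = e w * star (e' h) + e' h * star (e w) := by
  change fderiv ℝ (e * fun v => star (e v)) w h = _
  rw [(he.mul' he.star).fderiv]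
  simp

lemma fderiv_const_sub_sum_mul_single {𝕜 𝔸 ι : Type*} [NontriviallyNormedField 𝕜]
    [NormedRing 𝔸] [NormedAlgebra 𝕜 𝔸] [Fintype ι] [DecidableEq ι] (d : 𝔸) (x : ι → 𝔸)
    (w : ι → 𝔸) (m : ι) (q : 𝔸) :
    fderiv 𝕜 (fun v : ι → 𝔸 => d - ∑ l, v l * x l) w (Pi.single m q) = -(q * x m) := by
  have hsum : HasFDerivAt (fun v : ι → 𝔸 => ∑ l, v l * x l)
      (∑ l, MulOpposite.op (x l) • ContinuousLinearMap.proj l) w :=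
    HasFDerivAt.fun_sum fun l _ => (hasFDerivAt_apply (𝕜 := 𝕜) l w).mul_const' (x l)
  rw [(hsum.const_sub d).fderiv]
  simp [Pi.single_apply]

lemma hrStarPartial_mul_star_self {L : ℕ} {e : (Fin L → ℍ[ℝ]) → ℍ[ℝ]} {m : Fin L}
    {w : Fin L → ℍ[ℝ]} {a : ℍ[ℝ]} (he : DifferentiableAt ℝ e w)
    (hdir : ∀ q, fderiv ℝ e w (Pi.single m q) = -(q * a)) :
    HRStarPartial (fun v => e v * star (e v)) m w = -(2 : ℍ[ℝ])⁻¹ * (e w * star a) := by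
  simp only [HRStarPartial, he.hasFDerivAt.fderiv_mul_star_self_apply, hdir,
    hrStar_sum_mul_star_self]
  rw [← two_mul, mul_neg, ← mul_assoc, inv_four_mul_two, neg_mul]

theorem hr_star_partial_error_sq_general (L : ℕ) (d : ℍ[ℝ]) (x : Fin L → ℍ[ℝ])
    (m : Fin L) (w : Fin L → ℍ[ℝ]) :
    HRStarPartial (fun v => (d - ∑ l, v l * x l) * star (d - ∑ l, v l * x l)) m w
      = -(2 : ℍ[ℝ])⁻¹ * ((d - ∑ l, w l * x l) * star (x m)) :=
  hrStarPartial_mul_star_self (by fun_prop) (fderiv_const_sub_sum_mul_single d x w m)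

/-- With e(w) = d − Σ w_l·x_l, we have ∂(e·e*)/∂w_m* = −(1/2)·e·x_m*. -/
theorem hr_star_partial_error_sq (L : ℕ) (hL : 0 < L) (d : ℍ[ℝ]) (x : Fin L → ℍ[ℝ])
    (m : Fin L) (w : Fin L → ℍ[ℝ]) :
    HRStarPartial (fun v => (d - ∑ l, v l * x l) * star (d - ∑ l, v l * x l)) m w
      = -(2 : ℍ[ℝ])⁻¹ * ((d - ∑ l, w l * x l) * star (x m)) :=
  hr_star_partial_error_sq_general L d x m w
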